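/- arXiv:2009.10450 — 3 statements merged into one kernel-verified Lean document; each statement's English description precedes it below -/
import Mathlib

section
/- (Propagation of unconfoundedness to the dimension-reduced index, claim following Constraint 1). If the pair (Y(0),Y(1)) is conditionally independent of D given σ(X) and D is conditionally independent of X given σ(αᵀX) (Constraint 1: D ⊥ X | αᵀX), then the pair (Y(0),Y(1)) is conditionally independent of D given σ(αᵀX). -/
open MeasureTheory ProbabilityTheory

/-! Given αᵀX, the rest of X carries no information about D (Constraint 1), so conditional
probabilities of D-events given σ(X) and given σ(αᵀX) coincide. Conditioning the factorisation
`P(A ∩ B | X) = P(A | X) P(B | X)` down to σ(αᵀX) by the tower property, the factor `P(B | X)`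
with `B ∈ σ(D)` equals `P(B | αᵀX)` and pulls out, leaving `P(A | αᵀX) P(B | αᵀX)`. -/

namespace ProbabilityTheory

variable {Ω : Type*} {m m₁ m₂ m₃ : MeasurableSpace Ω} [mΩ : MeasurableSpace Ω] {μ : Measure Ω}

lemma ae_abs_condExp_indicator_le_one (s : Set Ω) : ∀ᵐ ω ∂μ, |(μ⟦s | m⟧) ω| ≤ 1 :=
  ae_bdd_abs_condExp_of_ae_bdd_abs <| .of_forall fun ω => by
    by_cases hω : ω ∈ s <;> simp [hω]

lemma integrable_condExp_indicator_mul (hm : m ≤ mΩ) (s : Set Ω) {f : Ω → ℝ}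
    (hf : Integrable f μ) : Integrable (fun ω => (μ⟦s | m⟧) ω * f ω) μ :=
  hf.bdd_mul (stronglyMeasurable_condExp.mono hm).aestronglyMeasurable
    (ae_abs_condExp_indicator_le_one s)

variable [StandardBorelSpace Ω] [IsFiniteMeasure μ]

lemma condExp_indicator_ae_eq_of_condIndep (hm : m ≤ m₂) (hm₂ : m₂ ≤ mΩ) (hm₁ : m₁ ≤ mΩ)
    (h : CondIndep m m₁ m₂ (hm.trans hm₂) μ) {s : Set Ω} (hs : MeasurableSet[m₁] s) :
    μ⟦s | m⟧ =ᵐ[μ] μ⟦s | m₂⟧ := by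
  have hm' := hm.trans hm₂
  rw [condIndep_iff _ _ _ _ hm₁ hm₂] at h
  refine ae_eq_condExp_of_forall_setIntegral_eq hm₂
    ((integrable_const 1).indicator (hm₁ s hs)) (fun _ _ _ => integrable_condExp.integrableOn)
    (fun C hC _ => ?_) (stronglyMeasurable_condExp.mono hm).aestronglyMeasurable
  have hC' := hm₂ C hC
  have hCint : Integrable (C.indicator fun _ => (1 : ℝ)) μ := (integrable_const 1).indicator hC'
  calc ∫ ω in C, (μ⟦s | m⟧) ω ∂μ
      = ∫ ω, (μ⟦s | m⟧) ω * C.indicator (fun _ => (1 : ℝ)) ω ∂μ := by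
        rw [← integral_indicator hC']
        congr 1 with ω
        by_cases hω : ω ∈ C <;> simp [hω]
    _ = ∫ ω, μ[fun ω => (μ⟦s | m⟧) ω * C.indicator (fun _ => (1 : ℝ)) ω | m] ω ∂μ :=
        (integral_condExp hm').symm
    _ = ∫ ω, (μ⟦s | m⟧) ω * (μ⟦C | m⟧) ω ∂μ :=
        integral_congr_ae <| condExp_mul_of_stronglyMeasurable_left stronglyMeasurable_condExp
          (integrable_condExp_indicator_mul hm' s hCint) hCint
    _ = ∫ ω, (μ⟦s ∩ C | m⟧) ω ∂μ := integral_congr_ae (h s C hs hC).symm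
    _ = ∫ ω in C, s.indicator (fun _ => (1 : ℝ)) ω ∂μ := by
        rw [integral_condExp hm', ← integral_indicator hC', Set.indicator_indicator,
          Set.inter_comm]

/-- Contraction followed by decomposition, in the language of graphoids. -/
theorem CondIndep.of_condIndep_of_le (hm : m ≤ m₂) (hm₂ : m₂ ≤ mΩ) (hm₁ : m₁ ≤ mΩ)
    (hm₃ : m₃ ≤ mΩ) (h : CondIndep m₂ m₁ m₃ hm₂ μ) (h' : CondIndep m m₃ m₂ (hm.trans hm₂) μ) :
    CondIndep m m₁ m₃ (hm.trans hm₂) μ := by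
  rw [condIndep_iff _ _ _ _ hm₁ hm₃] at h ⊢
  intro s t hs ht
  have hproj := condExp_indicator_ae_eq_of_condIndep hm hm₂ hm₃ h' ht
  calc μ⟦s ∩ t | m⟧
      =ᵐ[μ] μ[μ⟦s ∩ t | m₂⟧ | m] := (condExp_condExp_of_le hm hm₂).symm
    _ =ᵐ[μ] μ[μ⟦t | m⟧ * μ⟦s | m₂⟧ | m] := by
        refine condExp_congr_ae ?_
        filter_upwards [h s t hs ht, hproj] with ω hω_st hω_t
        rw [hω_st, Pi.mul_apply, Pi.mul_apply, hω_t, mul_comm]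
    _ =ᵐ[μ] μ⟦t | m⟧ * μ[μ⟦s | m₂⟧ | m] :=
        condExp_mul_of_stronglyMeasurable_left stronglyMeasurable_condExp
          (integrable_condExp_indicator_mul (hm.trans hm₂) t integrable_condExp) integrable_condExp
    _ =ᵐ[μ] μ⟦s | m⟧ * μ⟦t | m⟧ := by
        filter_upwards [condExp_condExp_of_le (f := s.indicator fun _ => (1 : ℝ)) hm hm₂]
          with ω hω
        rw [Pi.mul_apply, Pi.mul_apply, hω, mul_comm]

end ProbabilityTheory

theorem unconfoundedness_propagates_to_index_general
    {Ω : Type*} [mΩ : MeasurableSpace Ω] [StandardBorelSpace Ω]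
    (μ : Measure Ω) [IsProbabilityMeasure μ]
    {k q : ℕ}
    (D : Ω → ℝ) (Y0 Y1 : Ω → ℝ) (X : Ω → Fin k → ℝ)
    (hD : Measurable D) (hY0 : Measurable Y0) (hY1 : Measurable Y1) (hX : Measurable X)
    -- the linear index αᵀX
    (α : Matrix (Fin k) (Fin q) ℝ)
    (hαX : Measurable (fun ω => α.transpose.mulVec (X ω)))
    -- unconfoundedness: (Y(0),Y(1)) ⟂ D | σ(X)
    (hunconf : CondIndepFun (MeasurableSpace.comap X inferInstance) hX.comap_le
      (fun ω => (Y0 ω, Y1 ω)) D μ)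
    -- Constraint 1: D ⟂ X | σ(αᵀX)
    (hconstraint : CondIndepFun
      (MeasurableSpace.comap (fun ω => α.transpose.mulVec (X ω)) inferInstance)
      hαX.comap_le D X μ) :
    CondIndepFun
      (MeasurableSpace.comap (fun ω => α.transpose.mulVec (X ω)) inferInstance)
      hαX.comap_le (fun ω => (Y0 ω, Y1 ω)) D μ := by
  have hindex : Measurable fun v : Fin k → ℝ => α.transpose.mulVec v := by fun_prop
  have hle : MeasurableSpace.comap (fun ω => α.transpose.mulVec (X ω)) inferInstance ≤
      MeasurableSpace.comap X inferInstance :=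
    (hindex.comp (comap_measurable X)).comap_le
  rw [condIndepFun_iff_condIndep] at hunconf hconstraint ⊢
  exact hunconf.of_condIndep_of_le hle hX.comap_le (hY0.prodMk hY1).comap_le hD.comap_le
    hconstraint

/-- **Propagation of unconfoundedness to the dimension-reduced index**
(claim following Constraint 1). If `(Y(0),Y(1)) ⟂ D | σ(X)` and `D ⟂ X | σ(αᵀX)`
(Constraint 1), then `(Y(0),Y(1)) ⟂ D | σ(αᵀX)`. -/
theorem unconfoundedness_propagates_to_index
    {Ω : Type*} [mΩ : MeasurableSpace Ω] [StandardBorelSpace Ω] [Nonempty Ω]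
    (μ : Measure Ω) [IsProbabilityMeasure μ]
    {k q : ℕ} (hk : 2 ≤ k) (hqk : q ≤ k)
    (D : Ω → ℝ) (Y0 Y1 : Ω → ℝ) (X : Ω → Fin k → ℝ)
    (hD : Measurable D) (hY0 : Measurable Y0) (hY1 : Measurable Y1) (hX : Measurable X)
    (hD01 : ∀ ω, D ω = 0 ∨ D ω = 1)
    (hY0int : Integrable Y0 μ) (hY1int : Integrable Y1 μ)
    -- the linear index αᵀX
    (α : Matrix (Fin k) (Fin q) ℝ)
    (hαX : Measurable (fun ω => α.transpose.mulVec (X ω)))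
    -- unconfoundedness: (Y(0),Y(1)) ⟂ D | σ(X)
    (hunconf : CondIndepFun (MeasurableSpace.comap X inferInstance) hX.comap_le
      (fun ω => (Y0 ω, Y1 ω)) D μ)
    -- Constraint 1: D ⟂ X | σ(αᵀX)
    (hconstraint : CondIndepFun
      (MeasurableSpace.comap (fun ω => α.transpose.mulVec (X ω)) inferInstance)
      hαX.comap_le D X μ) :
    CondIndepFun
      (MeasurableSpace.comap (fun ω => α.transpose.mulVec (X ω)) inferInstance)
      hαX.comap_le (fun ω => (Y0 ω, Y1 ω)) D μ :=
  unconfoundedness_propagates_to_index_general (mΩ := mΩ) μ D Y0 Y1 X hD hY0 hY1 hX α hαX hunconf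
    hconstraint
end

section
/- (Key orthogonality identity used in the proof of Corollary 2.1). Almost surely, E[ψ·ε | σ(X)] = p(X)·(1−p(X))·n_p(X); equivalently, E[φ₂·ε | σ(X)] = 0 a.s., i.e. the influence function φ₂ of NCQTE is conditionally uncorrelated with the propensity-score residual ε = D − p(X). -/
/-!
Write `P = p(X)`. Since `D ∈ {0, 1}`, pointwise
`ψ·ε = (1 - P)/P · η₁(Y(1))·D + P/(1 - P) · η₀(Y(0))·(1 - D)`.
The two odds are `σ(X)`-measurable and bounded by `1/c` under overlap, so they come out of the
conditional expectation, and unconfoundedness factorises `E[η₁(Y(1))·D | X] = m₁·P` and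
`E[η₀(Y(0))·(1 - D) | X] = m₀·(1 - P)`; this gives `(1 - P)·m₁ + P·m₀ = P(1 - P)·n_p`.
For `φ₂·ε = ψ·ε - n_p(X)·ε²`, the factor `n_p(X)` is again `σ(X)`-measurable and
`E[ε² | X] = Var[D | X] = P(1 - P)` because `D` is Bernoulli, so the two terms cancel.
-/

open MeasureTheory ProbabilityTheory

lemma ite_le_sub_div_eq_indicator (q τ f y : ℝ) :
    ((if y ≤ q then (1 : ℝ) else 0) - τ) / f = f⁻¹ * (Set.Iic q).indicator 1 y + -(τ / f) := by
  by_cases h : y ≤ q <;> simp [h] <;> ring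

lemma ipw_mul_residual_eq (d p z₁ z₀ : ℝ) (hd : d = 0 ∨ d = 1) :
    (d / p * z₁ - (1 - d) / (1 - p) * z₀) * (d - p)
      = (1 - p) / p * (z₁ * d) + p / (1 - p) * (z₀ * (1 - d)) := by
  rcases hd with rfl | rfl <;> ring

lemma abs_one_sub_div_le_inv {c x : ℝ} (hc : 0 < c) (hcx : c ≤ x) (hx : x ≤ 1) :
    |(1 - x) / x| ≤ c⁻¹ := by
  have hx₀ : 0 < x := hc.trans_le hcx
  rw [abs_div, abs_of_nonneg (sub_nonneg.2 hx), abs_of_pos hx₀, div_le_iff₀ hx₀]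
  have : 1 ≤ c⁻¹ * x := by rwa [inv_mul_eq_div, one_le_div hc]
  linarith

section CondExp

variable {Ω β : Type*} {m mΩ : MeasurableSpace Ω} {μ : Measure Ω} {D : Ω → ℝ}

lemma comp_eq_affine_indicator_preimage {Y : Ω → β} {φ : β → ℝ} {s : Set β} {a b : ℝ}
    (hφ : ∀ y, φ y = a * s.indicator 1 y + b) :
    (fun ω => φ (Y ω)) = fun ω => a * (Y ⁻¹' s).indicator (fun _ => 1) ω + b := by
  ext ω
  by_cases h : Y ω ∈ s <;> simp [hφ, h]

lemma one_sub_eq_zero_or_one (hD01 : ∀ ω, D ω = 0 ∨ D ω = 1) :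
    ∀ ω, 1 - D ω = 0 ∨ 1 - D ω = 1 := fun ω => by
  rcases hD01 ω with h | h <;> simp [h]

lemma integrable_mul_of_zero_or_one {Z : Ω → ℝ} (hZ : Integrable Z μ) (hD : Measurable D)
    (hD01 : ∀ ω, D ω = 0 ∨ D ω = 1) : Integrable (fun ω => Z ω * D ω) μ :=
  hZ.mul_bdd hD.aestronglyMeasurable (c := 1) <| ae_of_all _ fun ω => by
    rcases hD01 ω with h | h <;> simp [h]

lemma MeasureTheory.Integrable.div_of_ae_le {c : ℝ} {f g : Ω → ℝ} (hf : Integrable f μ)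
    (hg : Measurable g) (hc : 0 < c) (hcg : ∀ᵐ ω ∂μ, c ≤ g ω) :
    Integrable (fun ω => f ω / g ω) μ := by
  simpa only [div_eq_mul_inv] using
    hf.mul_bdd (g := fun ω => (g ω)⁻¹) hg.inv.aestronglyMeasurable <| hcg.mono fun ω h => by
      rw [norm_inv, Real.norm_eq_abs, abs_of_pos (hc.trans_le h)]
      exact inv_anti₀ hc h

lemma condExp_mul_add_mul (a b : ℝ) {f g : Ω → ℝ} (hf : Integrable f μ) (hg : Integrable g μ) :
    μ[fun ω => a * f ω + b * g ω | m] =ᵐ[μ] fun ω => a * μ[f | m] ω + b * μ[g | m] ω := by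
  change μ[a • f + b • g | m] =ᵐ[μ] _
  filter_upwards [condExp_add (hf.smul a) (hg.smul b) m, condExp_smul (m := m) (μ := μ) a f,
    condExp_smul (m := m) (μ := μ) b g] with ω hadd hfa hgb
  simp [hadd, hfa, hgb]

variable [IsFiniteMeasure μ]

lemma integrable_comp_of_affine_indicator [MeasurableSpace β] {Y : Ω → β} (hY : Measurable Y)
    {s : Set β} (hs : MeasurableSet s) {φ : β → ℝ} {a b : ℝ}
    (hφ : ∀ y, φ y = a * s.indicator 1 y + b) : Integrable (fun ω => φ (Y ω)) μ := by
  rw [comp_eq_affine_indicator_preimage hφ]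
  exact (((integrable_const 1).indicator (hY hs)).const_mul a).add (integrable_const b)

lemma integrable_of_zero_or_one (hD : Measurable D) (hD01 : ∀ ω, D ω = 0 ∨ D ω = 1) :
    Integrable D μ := by
  simpa using integrable_mul_of_zero_or_one (integrable_const (1 : ℝ)) hD hD01

lemma condExp_mul_add_const (hm : m ≤ mΩ) (a b : ℝ) {f : Ω → ℝ} (hf : Integrable f μ) :
    μ[fun ω => a * f ω + b | m] =ᵐ[μ] fun ω => a * μ[f | m] ω + b := by
  filter_upwards [condExp_mul_add_mul (m := m) a b hf (integrable_const (1 : ℝ))] with ω h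
  simpa [condExp_const hm] using h

lemma condExp_one_sub (hm : m ≤ mΩ) {f : Ω → ℝ} (hf : Integrable f μ) :
    μ[fun ω => 1 - f ω | m] =ᵐ[μ] fun ω => 1 - μ[f | m] ω := by
  simpa [neg_add_eq_sub] using condExp_mul_add_const hm (-1) 1 hf

lemma condExp_stronglyMeasurable_mul_add_mul_of_bound (hm : m ≤ mΩ) {g₁ g₂ f₁ f₂ : Ω → ℝ}
    (hg₁ : StronglyMeasurable[m] g₁) (hg₂ : StronglyMeasurable[m] g₂)
    (hf₁ : Integrable f₁ μ) (hf₂ : Integrable f₂ μ) (C : ℝ)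
    (hg₁C : ∀ᵐ ω ∂μ, ‖g₁ ω‖ ≤ C) (hg₂C : ∀ᵐ ω ∂μ, ‖g₂ ω‖ ≤ C) :
    μ[fun ω => g₁ ω * f₁ ω + g₂ ω * f₂ ω | m] =ᵐ[μ]
      fun ω => g₁ ω * μ[f₁ | m] ω + g₂ ω * μ[f₂ | m] ω := by
  have hint₁ : Integrable (g₁ * f₁) μ := hf₁.bdd_mul (hg₁.mono hm).aestronglyMeasurable hg₁C
  have hint₂ : Integrable (g₂ * f₂) μ := hf₂.bdd_mul (hg₂.mono hm).aestronglyMeasurable hg₂C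
  change μ[(g₁ * f₁) + (g₂ * f₂) | m] =ᵐ[μ] _
  filter_upwards [condExp_add hint₁ hint₂ m,
    condExp_stronglyMeasurable_mul_of_bound hm hg₁ hf₁ C hg₁C,
    condExp_stronglyMeasurable_mul_of_bound hm hg₂ hf₂ C hg₂C] with ω hadd h₁ h₂
  rw [hadd, Pi.add_apply, h₁, h₂, Pi.mul_apply, Pi.mul_apply]

end CondExp

/-! Mathlib characterises conditional independence through indicators of preimages only, which
is enough here because each `η_j` is affine in the indicator of `Iic q_j`. -/
namespace ProbabilityTheory.CondIndepFun

variable {Ω β β' : Type*} {m mΩ : MeasurableSpace Ω} [StandardBorelSpace Ω] {hm : m ≤ mΩ}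
  {μ : Measure Ω} [IsFiniteMeasure μ] [MeasurableSpace β] [MeasurableSpace β']

theorem condExp_affine_indicator_mul_indicator {f : Ω → β} {g : Ω → β'}
    (hfg : CondIndepFun m hm f g μ) (hf : Measurable f) (hg : Measurable g)
    {s : Set β} {t : Set β'} (hs : MeasurableSet s) (ht : MeasurableSet t) (a b : ℝ) :
    μ[fun ω => (a * (f ⁻¹' s).indicator (fun _ => 1) ω + b) * (g ⁻¹' t).indicator (fun _ => 1) ω
        | m] =ᵐ[μ]
      fun ω => μ[fun ω => a * (f ⁻¹' s).indicator (fun _ => 1) ω + b | m] ω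
        * μ[(g ⁻¹' t).indicator (fun _ => 1) | m] ω := by
  have hind : ∀ {u : Set Ω}, MeasurableSet u → Integrable (u.indicator fun _ => (1 : ℝ)) μ :=
    fun hu => (integrable_const 1).indicator hu
  have hexpand : (fun ω => (a * (f ⁻¹' s).indicator (fun _ => 1) ω + b)
        * (g ⁻¹' t).indicator (fun _ => 1) ω) =
      fun ω => a * (f ⁻¹' s ∩ g ⁻¹' t).indicator (fun _ => (1 : ℝ)) ω
        + b * (g ⁻¹' t).indicator (fun _ => 1) ω := by
    ext ω
    by_cases hfs : f ω ∈ s <;> by_cases hgt : g ω ∈ t <;> simp [hfs, hgt]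
  rw [hexpand]
  filter_upwards [condExp_mul_add_mul (m := m) a b (hind ((hf hs).inter (hg ht))) (hind (hg ht)),
    condExp_mul_add_const hm a b (hind (hf hs)),
    (condIndepFun_iff_condExp_inter_preimage_eq_mul hf hg).1 hfg s t hs ht] with ω hlin haff hfac
  rw [hlin, haff, hfac]
  ring

theorem condExp_mul_eq_mul_condExp {Y : Ω → β} {D : Ω → ℝ}
    (hYD : CondIndepFun m hm Y D μ) (hY : Measurable Y) (hD : Measurable D)
    (hD01 : ∀ ω, D ω = 0 ∨ D ω = 1) {φ : β → ℝ} {s : Set β} (hs : MeasurableSet s) {a b : ℝ}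
    (hφ : ∀ y, φ y = a * s.indicator 1 y + b) :
    μ[fun ω => φ (Y ω) * D ω | m] =ᵐ[μ] fun ω => μ[fun ω => φ (Y ω) | m] ω * μ[D | m] ω := by
  have hφY := comp_eq_affine_indicator_preimage (Y := Y) hφ
  have hDind : D = (D ⁻¹' {1}).indicator fun _ => 1 := by
    ext ω
    rcases hD01 ω with h | h <;> simp [h]
  calc μ[fun ω => φ (Y ω) * D ω | m]
      = μ[fun ω => (a * (Y ⁻¹' s).indicator (fun _ => 1) ω + b)
          * (D ⁻¹' {1}).indicator (fun _ => 1) ω | m] := by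
        congr 1
        ext ω
        rw [congrFun hφY ω, ← congrFun hDind ω]
    _ =ᵐ[μ] _ := hYD.condExp_affine_indicator_mul_indicator hY hD hs (measurableSet_singleton 1) a b
    _ = _ := by rw [hφY, ← hDind]

end ProbabilityTheory.CondIndepFun

section Overlap

variable {Ω : Type*} {m mΩ : MeasurableSpace Ω} {μ : Measure Ω}
  {D P Z₀ Z₁ M₀ M₁ : Ω → ℝ} {c : ℝ}

lemma ae_norm_odds_le (hc : 0 < c) (hov : ∀ᵐ ω ∂μ, c ≤ P ω ∧ P ω ≤ 1 - c) :
    (∀ᵐ ω ∂μ, ‖(1 - P ω) / P ω‖ ≤ c⁻¹) ∧ ∀ᵐ ω ∂μ, ‖P ω / (1 - P ω)‖ ≤ c⁻¹ := by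
  constructor <;> filter_upwards [hov] with ω ⟨hcP, hP1⟩ <;> rw [Real.norm_eq_abs]
  · exact abs_one_sub_div_le_inv hc hcP (by linarith)
  · simpa using abs_one_sub_div_le_inv hc (by linarith : c ≤ 1 - P ω) (by linarith)

lemma integrable_ipw_mul_residual (hD : Measurable D)
    (hD01 : ∀ ω, D ω = 0 ∨ D ω = 1) (hP : Measurable P) (hc : 0 < c)
    (hov : ∀ᵐ ω ∂μ, c ≤ P ω ∧ P ω ≤ 1 - c) (hZ₁ : Integrable Z₁ μ) (hZ₀ : Integrable Z₀ μ) :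
    Integrable (fun ω => (D ω / P ω * Z₁ ω - (1 - D ω) / (1 - P ω) * Z₀ ω) * (D ω - P ω)) μ := by
  simp only [ipw_mul_residual_eq _ _ _ _ (hD01 _)]
  exact ((integrable_mul_of_zero_or_one hZ₁ hD hD01).bdd_mul
      ((measurable_const.sub hP).div hP).aestronglyMeasurable (ae_norm_odds_le hc hov).1).add
    ((integrable_mul_of_zero_or_one (D := fun ω => 1 - D ω) hZ₀ (measurable_const.sub hD)
        (one_sub_eq_zero_or_one hD01)).bdd_mul
      (hP.div (measurable_const.sub hP)).aestronglyMeasurable (ae_norm_odds_le hc hov).2)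

variable [IsFiniteMeasure μ]

lemma condExp_ipw_mul_residual (hm : m ≤ mΩ) (hD : Measurable D)
    (hD01 : ∀ ω, D ω = 0 ∨ D ω = 1) (hP : Measurable[m] P) (hPD : P =ᵐ[μ] μ[D | m])
    (hc : 0 < c) (hov : ∀ᵐ ω ∂μ, c ≤ P ω ∧ P ω ≤ 1 - c)
    (hZ₁ : Integrable Z₁ μ) (hZ₀ : Integrable Z₀ μ)
    (hM₁ : M₁ =ᵐ[μ] μ[Z₁ | m]) (hM₀ : M₀ =ᵐ[μ] μ[Z₀ | m])
    (hZD₁ : μ[fun ω => Z₁ ω * D ω | m] =ᵐ[μ] fun ω => μ[Z₁ | m] ω * μ[D | m] ω)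
    (hZD₀ : μ[fun ω => Z₀ ω * (1 - D ω) | m] =ᵐ[μ]
      fun ω => μ[Z₀ | m] ω * μ[fun ω => 1 - D ω | m] ω) :
    μ[fun ω => (D ω / P ω * Z₁ ω - (1 - D ω) / (1 - P ω) * Z₀ ω) * (D ω - P ω) | m] =ᵐ[μ]
      fun ω => P ω * (1 - P ω) * (M₁ ω / P ω + M₀ ω / (1 - P ω)) := by
  have hDint := integrable_of_zero_or_one (μ := μ) hD hD01
  simp only [ipw_mul_residual_eq _ _ _ _ (hD01 _)]
  filter_upwards [condExp_stronglyMeasurable_mul_add_mul_of_bound hm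
      (g₁ := fun ω => (1 - P ω) / P ω) (g₂ := fun ω => P ω / (1 - P ω))
      ((measurable_const.sub hP).div hP).stronglyMeasurable
      (hP.div (measurable_const.sub hP)).stronglyMeasurable
      (integrable_mul_of_zero_or_one hZ₁ hD hD01)
      (integrable_mul_of_zero_or_one (D := fun ω => 1 - D ω) hZ₀ (measurable_const.sub hD)
        (one_sub_eq_zero_or_one hD01))
      c⁻¹ (ae_norm_odds_le hc hov).1 (ae_norm_odds_le hc hov).2,
    hZD₁, hZD₀, condExp_one_sub hm hDint, hPD, hM₁, hM₀, hov]
    with ω h h₁ h₀ hD₀ hPω hM₁ω hM₀ω hovω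
  have hP₀ : P ω ≠ 0 := (hc.trans_le hovω.1).ne'
  have hP₁ : 1 - P ω ≠ 0 := by linarith [hovω.2]
  rw [h, h₁, h₀, hD₀, ← hPω, ← hM₁ω, ← hM₀ω]
  field_simp

lemma condExp_residual_sq (hm : m ≤ mΩ) (hD : Measurable D) (hD01 : ∀ ω, D ω = 0 ∨ D ω = 1)
    (hPD : P =ᵐ[μ] μ[D | m]) :
    μ[fun ω => (D ω - P ω) ^ 2 | m] =ᵐ[μ] fun ω => P ω * (1 - P ω) := by
  have hDint := integrable_of_zero_or_one (μ := μ) hD hD01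
  calc μ[fun ω => (D ω - P ω) ^ 2 | m]
      =ᵐ[μ] Var[D; μ | m] := condExp_congr_ae <| by
        filter_upwards [hPD] with ω h
        simp [h]
    _ =ᵐ[μ] μ[D | m] * μ[1 - D | m] :=
        condVar_of_ae_eq_zero_or_one hm hD.aemeasurable (ae_of_all _ hD01)
    _ =ᵐ[μ] fun ω => P ω * (1 - P ω) := by
        filter_upwards [hPD, condExp_one_sub hm hDint] with ω hPω h
        rw [Pi.mul_apply, ← hPω]
        exact congrArg _ (h.trans (by rw [hPω]))

lemma condExp_sub_mul_residual_mul_residual (hm : m ≤ mΩ) (hD : Measurable D)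
    (hD01 : ∀ ω, D ω = 0 ∨ D ω = 1) (hP : Measurable P) (hP01 : ∀ᵐ ω ∂μ, 0 ≤ P ω ∧ P ω ≤ 1)
    (hPD : P =ᵐ[μ] μ[D | m]) {Ψ N : Ω → ℝ} (hΨ : Integrable (fun ω => Ψ ω * (D ω - P ω)) μ)
    (hN : StronglyMeasurable[m] N) (hNint : Integrable N μ) :
    μ[fun ω => (Ψ ω - N ω * (D ω - P ω)) * (D ω - P ω) | m] =ᵐ[μ]
      fun ω => μ[fun ω => Ψ ω * (D ω - P ω) | m] ω - N ω * (P ω * (1 - P ω)) := by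
  have hbound : ∀ᵐ ω ∂μ, ‖(D ω - P ω) ^ 2‖ ≤ 1 := by
    filter_upwards [hP01] with ω ⟨hP₀, hP₁⟩
    rw [Real.norm_eq_abs, abs_le]
    rcases hD01 ω with h | h <;> rw [h] <;> constructor <;> nlinarith
  have hmeas : AEStronglyMeasurable (fun ω => (D ω - P ω) ^ 2) μ :=
    ((hD.sub hP).pow_const 2).aestronglyMeasurable
  have hsq : Integrable (fun ω => (D ω - P ω) ^ 2) μ := .of_bound hmeas 1 hbound
  have hNsq : Integrable (N * fun ω => (D ω - P ω) ^ 2) μ := hNint.mul_bdd hmeas hbound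
  have hsplit : (fun ω => (Ψ ω - N ω * (D ω - P ω)) * (D ω - P ω)) =
      (fun ω => Ψ ω * (D ω - P ω)) - N * fun ω => (D ω - P ω) ^ 2 := by
    ext ω
    simp only [Pi.sub_apply, Pi.mul_apply]
    ring
  rw [hsplit]
  filter_upwards [condExp_sub hΨ hNsq m, condExp_mul_of_stronglyMeasurable_left hN hNsq hsq,
    condExp_residual_sq hm hD hD01 hPD] with ω hsub hpull hvar
  rw [hsub, Pi.sub_apply, hpull, Pi.mul_apply, hvar]

lemma condExp_ipw_orthogonalized_mul_residual (hm : m ≤ mΩ) (hD : Measurable D)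
    (hD01 : ∀ ω, D ω = 0 ∨ D ω = 1) (hP : Measurable[m] P) (hPD : P =ᵐ[μ] μ[D | m])
    (hc : 0 < c) (hov : ∀ᵐ ω ∂μ, c ≤ P ω ∧ P ω ≤ 1 - c)
    (hZ₁ : Integrable Z₁ μ) (hZ₀ : Integrable Z₀ μ)
    (hM₁m : Measurable[m] M₁) (hM₀m : Measurable[m] M₀)
    (hM₁ : M₁ =ᵐ[μ] μ[Z₁ | m]) (hM₀ : M₀ =ᵐ[μ] μ[Z₀ | m])
    (hZD₁ : μ[fun ω => Z₁ ω * D ω | m] =ᵐ[μ] fun ω => μ[Z₁ | m] ω * μ[D | m] ω)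
    (hZD₀ : μ[fun ω => Z₀ ω * (1 - D ω) | m] =ᵐ[μ]
      fun ω => μ[Z₀ | m] ω * μ[fun ω => 1 - D ω | m] ω) :
    μ[fun ω => (D ω / P ω * Z₁ ω - (1 - D ω) / (1 - P ω) * Z₀ ω
        - (M₁ ω / P ω + M₀ ω / (1 - P ω)) * (D ω - P ω)) * (D ω - P ω) | m] =ᵐ[μ] 0 := by
  have hPΩ : Measurable P := hP.mono hm le_rfl
  have hN : Integrable (fun ω => M₁ ω / P ω + M₀ ω / (1 - P ω)) μ :=
    ((integrable_condExp.congr hM₁.symm).div_of_ae_le hPΩ hc (hov.mono fun _ h => h.1)).add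
      ((integrable_condExp.congr hM₀.symm).div_of_ae_le (measurable_const.sub hPΩ) hc
        (hov.mono fun _ h => by linarith [h.2]))
  filter_upwards [condExp_sub_mul_residual_mul_residual
      (N := fun ω => M₁ ω / P ω + M₀ ω / (1 - P ω)) hm hD hD01 hPΩ
      (hov.mono fun _ h => ⟨by linarith [h.1], by linarith [h.2]⟩) hPD
      (integrable_ipw_mul_residual hD hD01 hPΩ hc hov hZ₁ hZ₀)
      ((hM₁m.div hP).add (hM₀m.div (measurable_const.sub hP))).stronglyMeasurable hN,
    condExp_ipw_mul_residual hm hD hD01 hP hPD hc hov hZ₁ hZ₀ hM₁ hM₀ hZD₁ hZD₀] with ω h hipw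
  rw [h, hipw, Pi.zero_apply]
  ring

end Overlap

theorem ncqte_orthogonality_identity_general
    {Ω : Type*} [mΩ : MeasurableSpace Ω] [StandardBorelSpace Ω]
    (μ : Measure Ω) [IsProbabilityMeasure μ]
    {k : ℕ}
    (D : Ω → ℝ) (Y0 Y1 : Ω → ℝ) (X : Ω → Fin k → ℝ)
    (hD : Measurable D) (hY0 : Measurable Y0) (hY1 : Measurable Y1) (hX : Measurable X)
    (hD01 : ∀ ω, D ω = 0 ∨ D ω = 1)
    -- p(X) is a version of E[D | σ(X)]
    (p : (Fin k → ℝ) → ℝ) (hp : Measurable p)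
    (hpX : (fun ω => p (X ω)) =ᵐ[μ] μ[D | MeasurableSpace.comap X inferInstance])
    -- overlap
    (c : ℝ) (hc : 0 < c)
    (hoverlap : ∀ᵐ ω ∂μ, c ≤ p (X ω) ∧ p (X ω) ≤ 1 - c)
    -- unconfoundedness: (Y(0),Y(1)) ⟂ D | σ(X)
    (hunconf : CondIndepFun (MeasurableSpace.comap X inferInstance) hX.comap_le
      (fun ω => (Y0 ω, Y1 ω)) D μ)
    (τ : ℝ)
    (q0 q1 : ℝ) (f0 f1 : ℝ)
    -- η_j(y) = (1{y ≤ q_j} − τ)/f_j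
    (η0 η1 : ℝ → ℝ)
    (hη0 : ∀ y, η0 y = ((if y ≤ q0 then (1 : ℝ) else 0) - τ) / f0)
    (hη1 : ∀ y, η1 y = ((if y ≤ q1 then (1 : ℝ) else 0) - τ) / f1)
    -- ψ = (D/p(X))·η₁(Y(1)) − ((1−D)/(1−p(X)))·η₀(Y(0))
    (ψ : Ω → ℝ)
    (hψ : ∀ ω, ψ ω = (D ω / p (X ω)) * η1 (Y1 ω)
      - ((1 - D ω) / (1 - p (X ω))) * η0 (Y0 ω))
    -- m_j(X) is a version of E[η_j(Y(j)) | σ(X)]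
    (m0 m1 : (Fin k → ℝ) → ℝ) (hm0meas : Measurable m0) (hm1meas : Measurable m1)
    (hm0 : (fun ω => m0 (X ω)) =ᵐ[μ]
      μ[(fun ω => η0 (Y0 ω)) | MeasurableSpace.comap X inferInstance])
    (hm1 : (fun ω => m1 (X ω)) =ᵐ[μ]
      μ[(fun ω => η1 (Y1 ω)) | MeasurableSpace.comap X inferInstance])
    -- n_p(X) = m₁(X)/p(X) + m₀(X)/(1−p(X))
    (np : (Fin k → ℝ) → ℝ)
    (hnp : ∀ x, np x = m1 x / p x + m0 x / (1 - p x))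
    -- ε = D − p(X)
    (ε : Ω → ℝ) (hε : ∀ ω, ε ω = D ω - p (X ω))
    -- φ₂ = ψ − n_p(X)·ε
    (φ₂ : Ω → ℝ) (hφ₂ : ∀ ω, φ₂ ω = ψ ω - np (X ω) * ε ω) :
    (μ[(fun ω => ψ ω * ε ω) | MeasurableSpace.comap X inferInstance]
        =ᵐ[μ] fun ω => p (X ω) * (1 - p (X ω)) * np (X ω))
      ∧
    (μ[(fun ω => φ₂ ω * ε ω) | MeasurableSpace.comap X inferInstance]
        =ᵐ[μ] fun _ => (0 : ℝ)) := by
  have hη₁ (y : ℝ) := (hη1 y).trans (ite_le_sub_div_eq_indicator q1 τ f1 y)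
  have hη₀ (y : ℝ) := (hη0 y).trans (ite_le_sub_div_eq_indicator q0 τ f0 y)
  have hXm : Measurable[MeasurableSpace.comap X inferInstance] X := comap_measurable X
  have hZD₁ := (hunconf.comp measurable_snd measurable_id).condExp_mul_eq_mul_condExp
    (Y := Y1) hY1 hD hD01 measurableSet_Iic hη₁
  have hZD₀ := CondIndepFun.condExp_mul_eq_mul_condExp (Y := Y0) (D := fun ω => 1 - D ω)
    (hunconf.comp measurable_fst (measurable_const.sub measurable_id)) hY0
    (measurable_const.sub hD) (one_sub_eq_zero_or_one hD01) measurableSet_Iic hη₀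
  have hZ₁ := integrable_comp_of_affine_indicator (μ := μ) hY1 measurableSet_Iic hη₁
  have hZ₀ := integrable_comp_of_affine_indicator (μ := μ) hY0 measurableSet_Iic hη₀
  simp only [hφ₂, hψ, hε, hnp]
  exact ⟨condExp_ipw_mul_residual hX.comap_le hD hD01 (hp.comp hXm) hpX hc hoverlap hZ₁ hZ₀
      hm1 hm0 hZD₁ hZD₀,
    condExp_ipw_orthogonalized_mul_residual hX.comap_le hD hD01 (hp.comp hXm) hpX hc hoverlap
      hZ₁ hZ₀ (hm1meas.comp hXm) (hm0meas.comp hXm) hm1 hm0 hZD₁ hZD₀⟩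

/-- **Key orthogonality identity used in the proof of Corollary 2.1.**
Almost surely `E[ψ·ε | σ(X)] = p(X)(1−p(X))·n_p(X)`; equivalently
`E[φ₂·ε | σ(X)] = 0` a.s., i.e. the influence function `φ₂` of NCQTE is
conditionally uncorrelated with the propensity-score residual `ε = D − p(X)`. -/
theorem ncqte_orthogonality_identity
    {Ω : Type*} [mΩ : MeasurableSpace Ω] [StandardBorelSpace Ω] [Nonempty Ω]
    (μ : Measure Ω) [IsProbabilityMeasure μ]
    {k : ℕ} (hk : 2 ≤ k)
    (D : Ω → ℝ) (Y0 Y1 : Ω → ℝ) (X : Ω → Fin k → ℝ)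
    (hD : Measurable D) (hY0 : Measurable Y0) (hY1 : Measurable Y1) (hX : Measurable X)
    (hD01 : ∀ ω, D ω = 0 ∨ D ω = 1)
    (hY0int : Integrable Y0 μ) (hY1int : Integrable Y1 μ)
    -- p(X) is a version of E[D | σ(X)]
    (p : (Fin k → ℝ) → ℝ) (hp : Measurable p)
    (hpX : (fun ω => p (X ω)) =ᵐ[μ] μ[D | MeasurableSpace.comap X inferInstance])
    -- overlap
    (c : ℝ) (hc : 0 < c)
    (hoverlap : ∀ᵐ ω ∂μ, c ≤ p (X ω) ∧ p (X ω) ≤ 1 - c)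
    -- unconfoundedness: (Y(0),Y(1)) ⟂ D | σ(X)
    (hunconf : CondIndepFun (MeasurableSpace.comap X inferInstance) hX.comap_le
      (fun ω => (Y0 ω, Y1 ω)) D μ)
    (τ : ℝ) (hτ : τ ∈ Set.Ioo (0 : ℝ) 1)
    (q0 q1 : ℝ) (f0 f1 : ℝ) (hf0 : 0 < f0) (hf1 : 0 < f1)
    -- η_j(y) = (1{y ≤ q_j} − τ)/f_j
    (η0 η1 : ℝ → ℝ)
    (hη0 : ∀ y, η0 y = ((if y ≤ q0 then (1 : ℝ) else 0) - τ) / f0)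
    (hη1 : ∀ y, η1 y = ((if y ≤ q1 then (1 : ℝ) else 0) - τ) / f1)
    -- ψ = (D/p(X))·η₁(Y(1)) − ((1−D)/(1−p(X)))·η₀(Y(0))
    (ψ : Ω → ℝ)
    (hψ : ∀ ω, ψ ω = (D ω / p (X ω)) * η1 (Y1 ω)
      - ((1 - D ω) / (1 - p (X ω))) * η0 (Y0 ω))
    -- m_j(X) is a version of E[η_j(Y(j)) | σ(X)]
    (m0 m1 : (Fin k → ℝ) → ℝ) (hm0meas : Measurable m0) (hm1meas : Measurable m1)
    (hm0 : (fun ω => m0 (X ω)) =ᵐ[μ]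
      μ[(fun ω => η0 (Y0 ω)) | MeasurableSpace.comap X inferInstance])
    (hm1 : (fun ω => m1 (X ω)) =ᵐ[μ]
      μ[(fun ω => η1 (Y1 ω)) | MeasurableSpace.comap X inferInstance])
    -- n_p(X) = m₁(X)/p(X) + m₀(X)/(1−p(X))
    (np : (Fin k → ℝ) → ℝ)
    (hnp : ∀ x, np x = m1 x / p x + m0 x / (1 - p x))
    -- ε = D − p(X)
    (ε : Ω → ℝ) (hε : ∀ ω, ε ω = D ω - p (X ω))
    -- φ₂ = ψ − n_p(X)·ε
    (φ₂ : Ω → ℝ) (hφ₂ : ∀ ω, φ₂ ω = ψ ω - np (X ω) * ε ω) :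
    (μ[(fun ω => ψ ω * ε ω) | MeasurableSpace.comap X inferInstance]
        =ᵐ[μ] fun ω => p (X ω) * (1 - p (X ω)) * np (X ω))
      ∧
    (μ[(fun ω => φ₂ ω * ε ω) | MeasurableSpace.comap X inferInstance]
        =ᵐ[μ] fun _ => (0 : ℝ)) :=
  ncqte_orthogonality_identity_general (mΩ := mΩ) μ D Y0 Y1 X hD hY0 hY1 hX hD01 p hp hpX c hc
    hoverlap hunconf τ q0 q1 f0 f1 η0 η1 hη0 hη1 ψ hψ m0 m1 hm0meas hm1meas hm0 hm1 np hnp ε hε φ₂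
    hφ₂
end

section
/- (Corollary 2.1, part (2): PCQTE versus NCQTE variance comparison). Almost surely, E[ψ² | σ(X₁)] = E[φ₂² | σ(X₁)] + E[ p(X)(1−p(X)) · ( m₁(X)/p(X) + m₀(X)/(1−p(X)) )² | σ(X₁) ]; in particular E[φ₂² | σ(X₁)] ≤ E[ψ² | σ(X₁)] a.s., so the asymptotic variance σ²_{ncqte}* of NCQTE never exceeds the asymptotic variance σ²_{pcqte} = σ²_{ocqte} of PCQTE. -/
/-!
Put `P = p(X)`, `n = n_p(X)` and `ε = D - P`, so that `ψ = φ₂ + n ε`. Since `D² = D`,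
`E[ε² | X] = P (1 - P)`. Unconfoundedness gives `E[D η₁(Y(1)) | X] = P m₁` and
`E[(1 - D) η₀(Y(0)) | X] = (1 - P) m₀`, hence `E[ψ ε | X] = (1 - P) m₁ + P m₀ = n E[ε² | X]`:
the residual `φ₂` is conditionally orthogonal to `ε`, and expanding `ψ² = (φ₂ + n ε)²` gives
`E[ψ² | X] = E[φ₂² | X] + P (1 - P) n²`. The tower property carries this down to `σ(X₁) ≤ σ(X)`,
and the inequality follows because `P (1 - P) n² ≥ 0`. Overlap keeps every variable bounded,
which is all the integrability the argument needs.
-/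

open MeasureTheory ProbabilityTheory
open scoped ENNReal

section
variable {Ω : Type*} {m mΩ : MeasurableSpace Ω} {μ : Measure Ω}

theorem memLp_top_inv_of_le {f : Ω → ℝ} {c : ℝ} (hf : AEMeasurable f μ) (hc : 0 < c)
    (hfc : ∀ᵐ ω ∂μ, c ≤ f ω) : MemLp f⁻¹ ∞ μ := by
  refine memLp_top_of_bound hf.inv.aestronglyMeasurable c⁻¹ ?_
  filter_upwards [hfc] with ω hω
  rw [Pi.inv_apply, norm_inv, Real.norm_of_nonneg (hc.le.trans hω)]
  exact inv_anti₀ hc hω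

theorem memLp_top_inv_of_overlap {P : Ω → ℝ} {c : ℝ} (hP : AEMeasurable P μ) (hc : 0 < c)
    (hPc : ∀ᵐ ω ∂μ, c ≤ P ω ∧ P ω ≤ 1 - c) : MemLp P⁻¹ ∞ μ ∧ MemLp (1 - P)⁻¹ ∞ μ :=
  ⟨memLp_top_inv_of_le hP hc (hPc.mono fun _ h => h.1),
    memLp_top_inv_of_le (aemeasurable_const.sub hP) hc
      (hPc.mono fun _ h => by simp only [Pi.sub_apply, Pi.one_apply]; linarith [h.2])⟩

theorem memLp_top_of_mem_zero_one {D : Ω → ℝ} (hD : AEStronglyMeasurable D μ)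
    (hD01 : ∀ ω, D ω = 0 ∨ D ω = 1) : MemLp D ∞ μ :=
  memLp_top_of_bound hD 1 (.of_forall fun ω => by rcases hD01 ω with h | h <;> simp [h])

theorem comp_eq_smul_indicator_Iic_add_const {η : ℝ → ℝ} {q τ f : ℝ}
    (hη : ∀ y, η y = ((if y ≤ q then (1 : ℝ) else 0) - τ) / f) (Y : Ω → ℝ) :
    (fun ω => η (Y ω)) = f⁻¹ • (Y ⁻¹' Set.Iic q).indicator 1 + fun _ => -τ / f := by
  ext ω
  simp only [hη, Pi.add_apply, Pi.smul_apply, smul_eq_mul, Set.indicator, Set.mem_preimage,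
    Set.mem_Iic, Pi.one_apply]
  split_ifs <;> ring

theorem condExp_sq_eq_condExp_sq_sub_mul_add {ψ ε n : Ω → ℝ}
    (hψ : MemLp ψ 2 μ) (hε : MemLp ε 2 μ) (hn : StronglyMeasurable[m] n) (hn_top : MemLp n ∞ μ)
    (hcov : μ[ψ * ε|m] =ᵐ[μ] n * μ[ε ^ 2|m]) :
    μ[ψ ^ 2|m] =ᵐ[μ] μ[(ψ - n * ε) ^ 2|m] + n ^ 2 * μ[ε ^ 2|m] := by
  have hψε : Integrable (ψ * ε) μ := hψ.integrable_mul hε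
  have hε2 : Integrable (ε ^ 2) μ := hε.integrable_sq
  have hnε2 : Integrable (n * ε ^ 2) μ := hε2.mul_of_top_right hn_top
  have hr : Integrable ((2 : ℝ) • (ψ * ε) - n * ε ^ 2) μ := (hψε.smul (2 : ℝ)).sub hnε2
  have hφ : Integrable ((ψ - n * ε) ^ 2) μ := (hψ.sub (hε.mul hn_top)).integrable_sq
  have hsplit : ψ ^ 2 = (ψ - n * ε) ^ 2 + n * ((2 : ℝ) • (ψ * ε) - n * ε ^ 2) := by
    ext ω
    simp only [Pi.add_apply, Pi.mul_apply, Pi.sub_apply, Pi.pow_apply, Pi.smul_apply, smul_eq_mul]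
    ring
  have hr_ce : μ[(2 : ℝ) • (ψ * ε) - n * ε ^ 2|m] =ᵐ[μ] (2 : ℝ) • μ[ψ * ε|m] - n * μ[ε ^ 2|m] :=
    (condExp_sub (hψε.smul (2 : ℝ)) hnε2 m).trans
      ((condExp_smul (2 : ℝ) _ m).sub (condExp_mul_of_stronglyMeasurable_left hn hnε2 hε2))
  rw [hsplit]
  filter_upwards [condExp_add hφ (hr.mul_of_top_right hn_top) m,
    condExp_mul_of_stronglyMeasurable_left hn (hr.mul_of_top_right hn_top) hr, hr_ce, hcov]
    with ω h_add h_pull h_r h_cov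
  simp only [Pi.add_apply, Pi.mul_apply, Pi.sub_apply, Pi.pow_apply, Pi.smul_apply,
    smul_eq_mul] at h_add h_pull h_r h_cov ⊢
  rw [h_add, h_pull, h_r, h_cov]
  ring

theorem condExp_le_of_condExp_eq_add_condExp {f g h : Ω → ℝ}
    (hfgh : μ[f|m] =ᵐ[μ] μ[g|m] + μ[h|m]) (hh : 0 ≤ᵐ[μ] h) : μ[g|m] ≤ᵐ[μ] μ[f|m] := by
  filter_upwards [hfgh, condExp_nonneg hh] with ω h_eq h_nonneg
  exact (le_add_of_nonneg_right h_nonneg).trans_eq h_eq.symm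

variable [IsFiniteMeasure μ]

theorem memLp_top_smul_indicator_add_const {s : Set Ω} (hs : MeasurableSet s) (a b : ℝ) :
    MemLp (a • s.indicator (1 : Ω → ℝ) + fun _ => b) ∞ μ := by
  have h1 : MemLp (s.indicator (1 : Ω → ℝ)) ∞ μ := (memLp_const (1 : ℝ)).indicator hs
  exact (h1.const_smul a).add (memLp_const b)

theorem condExp_add_of_condExp_eq_add {m₁ m₂ : MeasurableSpace Ω} (h₁₂ : m₁ ≤ m₂)
    (h₂ : m₂ ≤ mΩ) {f g h : Ω → ℝ} (hfgh : μ[f|m₂] =ᵐ[μ] μ[g|m₂] + h) :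
    μ[f|m₁] =ᵐ[μ] μ[g|m₁] + μ[h|m₁] := by
  have hh : Integrable h μ :=
    ((integrable_condExp (m := m₂) (f := f)).sub (integrable_condExp (f := g))).congr <| by
      filter_upwards [hfgh] with ω hω
      rw [Pi.sub_apply, hω, Pi.add_apply, add_sub_cancel_left]
  calc μ[f|m₁] =ᵐ[μ] μ[μ[f|m₂]|m₁] := (condExp_condExp_of_le h₁₂ h₂).symm
    _ =ᵐ[μ] μ[μ[g|m₂] + h|m₁] := condExp_congr_ae hfgh
    _ =ᵐ[μ] μ[μ[g|m₂]|m₁] + μ[h|m₁] := condExp_add integrable_condExp hh m₁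
    _ =ᵐ[μ] μ[g|m₁] + μ[h|m₁] := (condExp_condExp_of_le h₁₂ h₂).add (.refl _ _)

theorem condExp_sub_sq_of_mem_zero_one (hm : m ≤ mΩ) {D P : Ω → ℝ}
    (hD : AEStronglyMeasurable D μ) (hD01 : ∀ ω, D ω = 0 ∨ D ω = 1)
    (hP : StronglyMeasurable[m] P) (hDP : μ[D|m] =ᵐ[μ] P) :
    μ[(D - P) ^ 2|m] =ᵐ[μ] P * (1 - P) := by
  have hD_top : MemLp D ∞ μ := memLp_top_of_mem_zero_one hD hD01
  have hP_top : MemLp P ∞ μ := (hD_top.condExp le_top).ae_eq hDP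
  have hD_int : Integrable D μ := hD_top.integrable le_top
  have hcoef : MemLp ((1 : Ω → ℝ) - (2 : ℝ) • P) ∞ μ :=
    (memLp_const 1).sub (hP_top.const_smul (2 : ℝ))
  have hsplit : (D - P) ^ 2 = ((1 : Ω → ℝ) - (2 : ℝ) • P) * D + P * P := by
    ext ω
    rcases hD01 ω with h | h <;>
      simp only [Pi.add_apply, Pi.mul_apply, Pi.sub_apply, Pi.pow_apply, Pi.smul_apply,
        Pi.one_apply, smul_eq_mul, h] <;> ring
  rw [hsplit]
  have hPP : Integrable (P * P) μ := (hP_top.mul hP_top).integrable le_top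
  have hcoefD : Integrable (((1 : Ω → ℝ) - (2 : ℝ) • P) * D) μ := hD_int.mul_of_top_right hcoef
  have hcoef_m : StronglyMeasurable[m] ((1 : Ω → ℝ) - (2 : ℝ) • P) :=
    stronglyMeasurable_one.sub (hP.const_smul _)
  filter_upwards [condExp_add hcoefD hPP m,
    condExp_mul_of_stronglyMeasurable_left hcoef_m hcoefD hD_int, hDP]
    with ω h_add h_pull h_DP
  rw [h_add, Pi.add_apply, h_pull, condExp_of_stronglyMeasurable hm (hP.mul hP) hPP]
  simp only [Pi.mul_apply, Pi.sub_apply, Pi.smul_apply, Pi.one_apply, smul_eq_mul, h_DP]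
  ring

theorem condExp_ipw_mul_sub (hm : m ≤ mΩ) {D P U₀ U₁ M₀ M₁ : Ω → ℝ} {c : ℝ}
    (hD01 : ∀ ω, D ω = 0 ∨ D ω = 1) (hP : StronglyMeasurable[m] P) (hc : 0 < c)
    (hPc : ∀ᵐ ω ∂μ, c ≤ P ω ∧ P ω ≤ 1 - c)
    (hDU₁_int : Integrable (D * U₁) μ) (hDU₀_int : Integrable ((1 - D) * U₀) μ)
    (hDU₁ : μ[D * U₁|m] =ᵐ[μ] P * M₁) (hDU₀ : μ[(1 - D) * U₀|m] =ᵐ[μ] (1 - P) * M₀) :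
    μ[(D / P * U₁ - (1 - D) / (1 - P) * U₀) * (D - P)|m] =ᵐ[μ]
      (M₁ / P + M₀ / (1 - P)) * (P * (1 - P)) := by
  have hPm : Measurable[m] P := hP.measurable
  have hP_top : MemLp P ∞ μ := by
    refine memLp_top_of_bound (hP.mono hm).aestronglyMeasurable 1 ?_
    filter_upwards [hPc] with ω hω
    rw [Real.norm_eq_abs, abs_le]
    constructor <;> linarith
  obtain ⟨hPinv, hQinv⟩ := memLp_top_inv_of_overlap (hP.mono hm).measurable.aemeasurable hc hPc
  have ha : MemLp ((1 - P) / P) ∞ μ := by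
    rw [div_eq_mul_inv]; exact hPinv.mul ((memLp_const 1).sub hP_top)
  have hb : MemLp (P / (1 - P)) ∞ μ := by
    rw [div_eq_mul_inv]; exact hQinv.mul hP_top
  have ha_m : StronglyMeasurable[m] ((1 - P) / P) :=
    ((measurable_const.sub hPm).div hPm).stronglyMeasurable
  have hb_m : StronglyMeasurable[m] (P / (1 - P)) :=
    (hPm.div (measurable_const.sub hPm)).stronglyMeasurable
  have hsplit : (D / P * U₁ - (1 - D) / (1 - P) * U₀) * (D - P)
      = (1 - P) / P * (D * U₁) + P / (1 - P) * ((1 - D) * U₀) := by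
    ext ω
    rcases hD01 ω with h | h <;>
      simp only [Pi.add_apply, Pi.mul_apply, Pi.sub_apply, Pi.div_apply, Pi.one_apply, h] <;> ring
  rw [hsplit]
  filter_upwards [condExp_add (hDU₁_int.mul_of_top_right ha) (hDU₀_int.mul_of_top_right hb) m,
    condExp_mul_of_stronglyMeasurable_left ha_m (hDU₁_int.mul_of_top_right ha) hDU₁_int,
    condExp_mul_of_stronglyMeasurable_left hb_m (hDU₀_int.mul_of_top_right hb) hDU₀_int,
    hDU₁, hDU₀, hPc] with ω h_add h_pull₁ h_pull₀ h₁ h₀ hω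
  have hP0 : P ω ≠ 0 := by linarith
  have hP1 : 1 - P ω ≠ 0 := by linarith
  rw [h_add, Pi.add_apply, h_pull₁, h_pull₀]
  simp only [Pi.add_apply, Pi.mul_apply, Pi.sub_apply, Pi.div_apply, Pi.one_apply, h₁, h₀]
  field_simp

theorem condExp_ipw_sq_eq_condExp_residual_sq_add (hm : m ≤ mΩ) {D P U₀ U₁ M₀ M₁ : Ω → ℝ}
    {c : ℝ} (hD : AEStronglyMeasurable D μ) (hD01 : ∀ ω, D ω = 0 ∨ D ω = 1)
    (hP : StronglyMeasurable[m] P) (hDP : μ[D|m] =ᵐ[μ] P) (hc : 0 < c)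
    (hPc : ∀ᵐ ω ∂μ, c ≤ P ω ∧ P ω ≤ 1 - c) (hU₀ : MemLp U₀ ∞ μ) (hU₁ : MemLp U₁ ∞ μ)
    (hM₀ : StronglyMeasurable[m] M₀) (hM₁ : StronglyMeasurable[m] M₁)
    (hUM₀ : M₀ =ᵐ[μ] μ[U₀|m]) (hUM₁ : M₁ =ᵐ[μ] μ[U₁|m])
    (hDU₀ : μ[(1 - D) * U₀|m] =ᵐ[μ] (1 - P) * M₀) (hDU₁ : μ[D * U₁|m] =ᵐ[μ] P * M₁) :
    μ[(D / P * U₁ - (1 - D) / (1 - P) * U₀) ^ 2|m] =ᵐ[μ]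
      μ[(D / P * U₁ - (1 - D) / (1 - P) * U₀ - (M₁ / P + M₀ / (1 - P)) * (D - P)) ^ 2|m]
        + P * (1 - P) * (M₁ / P + M₀ / (1 - P)) ^ 2 := by
  have hD_top : MemLp D ∞ μ := memLp_top_of_mem_zero_one hD hD01
  have h1D_top : MemLp (1 - D) ∞ μ := (memLp_const 1).sub hD_top
  have hP_top : MemLp P ∞ μ := (hD_top.condExp le_top).ae_eq hDP
  obtain ⟨hPinv, hQinv⟩ := memLp_top_inv_of_overlap (hP.mono hm).measurable.aemeasurable hc hPc
  have hN_top : MemLp (M₁ / P + M₀ / (1 - P)) ∞ μ := by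
    rw [div_eq_mul_inv, div_eq_mul_inv]
    exact (hPinv.mul ((hU₁.condExp le_top).ae_eq hUM₁.symm)).add
      (hQinv.mul ((hU₀.condExp le_top).ae_eq hUM₀.symm))
  have hψ_top : MemLp (D / P * U₁ - (1 - D) / (1 - P) * U₀) ∞ μ := by
    rw [div_eq_mul_inv, div_eq_mul_inv]
    exact (hU₁.mul (hPinv.mul hD_top (r := ∞))).sub (hU₀.mul (hQinv.mul h1D_top (r := ∞)))
  have hN : StronglyMeasurable[m] (M₁ / P + M₀ / (1 - P)) :=
    ((hM₁.measurable.div hP.measurable).add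
      (hM₀.measurable.div (measurable_const.sub hP.measurable))).stronglyMeasurable
  have hvar : μ[(D - P) ^ 2|m] =ᵐ[μ] P * (1 - P) :=
    condExp_sub_sq_of_mem_zero_one hm hD hD01 hP hDP
  have hcov : μ[(D / P * U₁ - (1 - D) / (1 - P) * U₀) * (D - P)|m] =ᵐ[μ]
      (M₁ / P + M₀ / (1 - P)) * μ[(D - P) ^ 2|m] :=
    (condExp_ipw_mul_sub hm hD01 hP hc hPc ((hU₁.mul hD_top).integrable le_top)
      ((hU₀.mul h1D_top).integrable le_top) hDU₁ hDU₀).trans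
      (Filter.EventuallyEq.rfl.mul hvar.symm)
  filter_upwards [condExp_sq_eq_condExp_sq_sub_mul_add (hψ_top.mono_exponent le_top)
    ((hD_top.sub hP_top).mono_exponent le_top) hN hN_top hcov, hvar] with ω h_pyth h_var
  simp only [Pi.add_apply, Pi.mul_apply, Pi.pow_apply] at h_pyth h_var ⊢
  rw [h_pyth, h_var]
  ring

end

namespace ProbabilityTheory

variable {Ω β β' : Type*} {m mΩ : MeasurableSpace Ω} [StandardBorelSpace Ω] {hm : m ≤ mΩ}
  {μ : Measure Ω} [IsFiniteMeasure μ] [MeasurableSpace β] [MeasurableSpace β']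

theorem CondIndepFun.condExp_indicator_mul_affine {f : Ω → β} {g : Ω → β'}
    (h : CondIndepFun m hm f g μ) (hf : Measurable f) (hg : Measurable g)
    {s : Set β} {t : Set β'} (hs : MeasurableSet s) (ht : MeasurableSet t)
    {V U : Ω → ℝ} {a b : ℝ} (hV : V = (f ⁻¹' s).indicator 1)
    (hU : U = a • (g ⁻¹' t).indicator 1 + fun _ => b) :
    μ[V * U|m] =ᵐ[μ] μ[V|m] * μ[U|m] := by
  subst hV hU
  have hS : Integrable ((f ⁻¹' s).indicator (1 : Ω → ℝ)) μ :=
    (integrable_const 1).indicator (hf hs)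
  have hT : Integrable ((g ⁻¹' t).indicator (1 : Ω → ℝ)) μ :=
    (integrable_const 1).indicator (hg ht)
  have hST : Integrable ((f ⁻¹' s ∩ g ⁻¹' t).indicator (1 : Ω → ℝ)) μ :=
    (integrable_const 1).indicator ((hf hs).inter (hg ht))
  have hsplit : (f ⁻¹' s).indicator 1 * (a • (g ⁻¹' t).indicator 1 + fun _ => b)
      = a • (f ⁻¹' s ∩ g ⁻¹' t).indicator (1 : Ω → ℝ) + b • (f ⁻¹' s).indicator 1 := by
    ext ω
    simp only [Pi.add_apply, Pi.mul_apply, Pi.smul_apply, smul_eq_mul, Set.indicator,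
      Set.mem_inter_iff, Pi.one_apply]
    split_ifs <;> simp_all
  have h_indep : μ[(f ⁻¹' s ∩ g ⁻¹' t).indicator (1 : Ω → ℝ)|m] =ᵐ[μ]
      μ[(f ⁻¹' s).indicator 1|m] * μ[(g ⁻¹' t).indicator 1|m] :=
    (condIndepFun_iff_condExp_inter_preimage_eq_mul hf hg).1 h s t hs ht
  rw [hsplit]
  filter_upwards [condExp_add (hST.smul a) (hS.smul b) m,
    condExp_smul a ((f ⁻¹' s ∩ g ⁻¹' t).indicator (1 : Ω → ℝ)) m,
    condExp_smul b ((f ⁻¹' s).indicator (1 : Ω → ℝ)) m,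
    condExp_add (hT.smul a) (integrable_const b) m,
    condExp_smul a ((g ⁻¹' t).indicator (1 : Ω → ℝ)) m, h_indep]
    with ω h₁ h₂ h₃ h₄ h₅ h₆
  rw [condExp_const hm b] at h₄
  simp only [Pi.add_apply, Pi.mul_apply, Pi.smul_apply, smul_eq_mul] at h₁ h₂ h₃ h₄ h₅ h₆ ⊢
  rw [h₁, h₂, h₃, h₄, h₅, h₆]
  ring

theorem CondIndepFun.condExp_treatment_mul_affine {D : Ω → ℝ} {Y : Ω → β}
    (h : CondIndepFun m hm D Y μ) (hD : Measurable D) (hY : Measurable Y)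
    (hD01 : ∀ ω, D ω = 0 ∨ D ω = 1) {t : Set β} (ht : MeasurableSet t) {U P M : Ω → ℝ}
    {a b : ℝ} (hU : U = a • (Y ⁻¹' t).indicator 1 + fun _ => b) (hDP : μ[D|m] =ᵐ[μ] P)
    (hUM : M =ᵐ[μ] μ[U|m]) :
    μ[D * U|m] =ᵐ[μ] P * M ∧ μ[(1 - D) * U|m] =ᵐ[μ] (1 - P) * M := by
  have hD₁ : D = (D ⁻¹' {1}).indicator 1 := by
    ext ω; rcases hD01 ω with h | h <;> simp [h]
  have hD₀ : 1 - D = (D ⁻¹' {0}).indicator 1 := by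
    ext ω; rcases hD01 ω with h | h <;> simp [h]
  have h1D : μ[1 - D|m] =ᵐ[μ] 1 - P := by
    have hD_int : Integrable D μ :=
      (memLp_top_of_mem_zero_one hD.aestronglyMeasurable hD01).integrable le_top
    refine (condExp_sub (integrable_const 1) hD_int _).trans ?_
    rw [condExp_const hm]
    exact Filter.EventuallyEq.rfl.sub hDP
  exact ⟨(h.condExp_indicator_mul_affine hD hY (measurableSet_singleton 1) ht hD₁ hU).trans
      (hDP.mul hUM.symm),
    (h.condExp_indicator_mul_affine hD hY (measurableSet_singleton 0) ht hD₀ hU).trans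
      (h1D.mul hUM.symm)⟩

end ProbabilityTheory

theorem pcqte_vs_ncqte_variance_comparison_general
    {Ω : Type*} [mΩ : MeasurableSpace Ω] [StandardBorelSpace Ω] [Nonempty Ω]
    (μ : Measure Ω) [IsProbabilityMeasure μ]
    {k l : ℕ} (hlk : l < k)
    (D : Ω → ℝ) (Y0 Y1 : Ω → ℝ) (X : Ω → Fin k → ℝ)
    (hD : Measurable D) (hY0 : Measurable Y0) (hY1 : Measurable Y1) (hX : Measurable X)
    (hD01 : ∀ ω, D ω = 0 ∨ D ω = 1)
    (X₁ : Ω → Fin l → ℝ)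
    (hX₁ : ∀ ω i, X₁ ω i = X ω (Fin.castLE hlk.le i))
    -- p(X) is a version of E[D | σ(X)]
    (p : (Fin k → ℝ) → ℝ) (hp : Measurable p)
    (hpX : (fun ω => p (X ω)) =ᵐ[μ] μ[D | MeasurableSpace.comap X inferInstance])
    -- overlap
    (c : ℝ) (hc : 0 < c)
    (hoverlap : ∀ᵐ ω ∂μ, c ≤ p (X ω) ∧ p (X ω) ≤ 1 - c)
    -- unconfoundedness: (Y(0),Y(1)) ⟂ D | σ(X)
    (hunconf : CondIndepFun (MeasurableSpace.comap X inferInstance) hX.comap_le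
      (fun ω => (Y0 ω, Y1 ω)) D μ)
    (τ : ℝ)
    (q0 q1 : ℝ) (f0 f1 : ℝ)
    -- η_j(y) = (1{y ≤ q_j} − τ)/f_j
    (η0 η1 : ℝ → ℝ)
    (hη0 : ∀ y, η0 y = ((if y ≤ q0 then (1 : ℝ) else 0) - τ) / f0)
    (hη1 : ∀ y, η1 y = ((if y ≤ q1 then (1 : ℝ) else 0) - τ) / f1)
    -- ψ = (D/p(X))·η₁(Y(1)) − ((1−D)/(1−p(X)))·η₀(Y(0))
    (ψ : Ω → ℝ)
    (hψ : ∀ ω, ψ ω = (D ω / p (X ω)) * η1 (Y1 ω)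
      - ((1 - D ω) / (1 - p (X ω))) * η0 (Y0 ω))
    -- m_j(X) is a version of E[η_j(Y(j)) | σ(X)]
    (m0 m1 : (Fin k → ℝ) → ℝ) (hm0meas : Measurable m0) (hm1meas : Measurable m1)
    (hm0 : (fun ω => m0 (X ω)) =ᵐ[μ]
      μ[(fun ω => η0 (Y0 ω)) | MeasurableSpace.comap X inferInstance])
    (hm1 : (fun ω => m1 (X ω)) =ᵐ[μ]
      μ[(fun ω => η1 (Y1 ω)) | MeasurableSpace.comap X inferInstance])
    -- n_p(X) = m₁(X)/p(X) + m₀(X)/(1−p(X))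
    (np : (Fin k → ℝ) → ℝ)
    (hnp : ∀ x, np x = m1 x / p x + m0 x / (1 - p x))
    -- ε = D − p(X)
    (ε : Ω → ℝ) (hε : ∀ ω, ε ω = D ω - p (X ω))
    -- φ₂ = ψ − n_p(X)·ε
    (φ₂ : Ω → ℝ) (hφ₂ : ∀ ω, φ₂ ω = ψ ω - np (X ω) * ε ω) :
    (μ[(fun ω => (ψ ω) ^ 2) | MeasurableSpace.comap X₁ inferInstance]
        =ᵐ[μ]
      μ[(fun ω => (φ₂ ω) ^ 2) | MeasurableSpace.comap X₁ inferInstance]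
        + μ[(fun ω => p (X ω) * (1 - p (X ω)) * (np (X ω)) ^ 2) |
            MeasurableSpace.comap X₁ inferInstance])
      ∧
    (∀ᵐ ω ∂μ,
      (μ[(fun ω' => (φ₂ ω') ^ 2) | MeasurableSpace.comap X₁ inferInstance]) ω
        ≤ (μ[(fun ω' => (ψ ω') ^ 2) | MeasurableSpace.comap X₁ inferInstance]) ω) := by
  have hGΩ : MeasurableSpace.comap X inferInstance ≤ mΩ := hX.comap_le
  have hHG : MeasurableSpace.comap X₁ inferInstance ≤ MeasurableSpace.comap X inferInstance := by
    rw [show X₁ = (fun x i => x (Fin.castLE hlk.le i)) ∘ X from funext fun ω => funext (hX₁ ω)]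
    exact ((measurable_pi_lambda _ fun i => measurable_pi_apply _).comp
      (comap_measurable X)).comap_le
  have hXm : Measurable[MeasurableSpace.comap X inferInstance] X := comap_measurable X
  -- after these substitutions the goal matches the lemmas up to unfolding `Pi` operations
  obtain rfl : ψ = _ := funext hψ
  obtain rfl : ε = _ := funext hε
  obtain rfl : φ₂ = _ := funext hφ₂
  obtain rfl : np = _ := funext hnp
  have hU₀ := comp_eq_smul_indicator_Iic_add_const hη0 Y0
  have hU₁ := comp_eq_smul_indicator_Iic_add_const hη1 Y1
  have hDU₀ := ((hunconf.comp measurable_fst measurable_id).symm.condExp_treatment_mul_affine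
    hD hY0 hD01 measurableSet_Iic hU₀ hpX.symm hm0).2
  have hDU₁ := ((hunconf.comp measurable_snd measurable_id).symm.condExp_treatment_mul_affine
    hD hY1 hD01 measurableSet_Iic hU₁ hpX.symm hm1).1
  have hdecomp := condExp_add_of_condExp_eq_add hHG hGΩ
    (condExp_ipw_sq_eq_condExp_residual_sq_add hGΩ hD.aestronglyMeasurable hD01
      (hp.comp hXm).stronglyMeasurable hpX.symm hc hoverlap
      (hU₀ ▸ memLp_top_smul_indicator_add_const (hY0 measurableSet_Iic) _ _)
      (hU₁ ▸ memLp_top_smul_indicator_add_const (hY1 measurableSet_Iic) _ _)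
      (hm0meas.comp hXm).stronglyMeasurable (hm1meas.comp hXm).stronglyMeasurable hm0 hm1
      hDU₀ hDU₁)
  refine ⟨hdecomp, condExp_le_of_condExp_eq_add_condExp hdecomp ?_⟩
  filter_upwards [hoverlap] with ω ⟨h₁, h₂⟩
  have hvar_nonneg : 0 ≤ p (X ω) * (1 - p (X ω)) := mul_nonneg (by linarith) (by linarith)
  exact mul_nonneg hvar_nonneg (sq_nonneg _)

/-- **Corollary 2.1, part (2): PCQTE versus NCQTE variance comparison.** Almost surely
`E[ψ² | σ(X₁)] = E[φ₂² | σ(X₁)] + E[ p(X)(1−p(X))·(m₁(X)/p(X) + m₀(X)/(1−p(X)))² | σ(X₁) ]`;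
in particular `E[φ₂² | σ(X₁)] ≤ E[ψ² | σ(X₁)]` a.s., so the asymptotic variance of NCQTE
never exceeds that of PCQTE (which equals that of OCQTE). -/
theorem pcqte_vs_ncqte_variance_comparison
    {Ω : Type*} [mΩ : MeasurableSpace Ω] [StandardBorelSpace Ω] [Nonempty Ω]
    (μ : Measure Ω) [IsProbabilityMeasure μ]
    {k l : ℕ} (hk : 2 ≤ k) (hl : 1 ≤ l) (hlk : l < k)
    (D : Ω → ℝ) (Y0 Y1 : Ω → ℝ) (X : Ω → Fin k → ℝ)
    (hD : Measurable D) (hY0 : Measurable Y0) (hY1 : Measurable Y1) (hX : Measurable X)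
    (hD01 : ∀ ω, D ω = 0 ∨ D ω = 1)
    (hY0int : Integrable Y0 μ) (hY1int : Integrable Y1 μ)
    (X₁ : Ω → Fin l → ℝ)
    (hX₁ : ∀ ω i, X₁ ω i = X ω (Fin.castLE hlk.le i))
    -- p(X) is a version of E[D | σ(X)]
    (p : (Fin k → ℝ) → ℝ) (hp : Measurable p)
    (hpX : (fun ω => p (X ω)) =ᵐ[μ] μ[D | MeasurableSpace.comap X inferInstance])
    -- overlap
    (c : ℝ) (hc : 0 < c)
    (hoverlap : ∀ᵐ ω ∂μ, c ≤ p (X ω) ∧ p (X ω) ≤ 1 - c)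
    -- unconfoundedness: (Y(0),Y(1)) ⟂ D | σ(X)
    (hunconf : CondIndepFun (MeasurableSpace.comap X inferInstance) hX.comap_le
      (fun ω => (Y0 ω, Y1 ω)) D μ)
    (τ : ℝ) (hτ : τ ∈ Set.Ioo (0 : ℝ) 1)
    (q0 q1 : ℝ) (f0 f1 : ℝ) (hf0 : 0 < f0) (hf1 : 0 < f1)
    -- η_j(y) = (1{y ≤ q_j} − τ)/f_j
    (η0 η1 : ℝ → ℝ)
    (hη0 : ∀ y, η0 y = ((if y ≤ q0 then (1 : ℝ) else 0) - τ) / f0)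
    (hη1 : ∀ y, η1 y = ((if y ≤ q1 then (1 : ℝ) else 0) - τ) / f1)
    -- ψ = (D/p(X))·η₁(Y(1)) − ((1−D)/(1−p(X)))·η₀(Y(0))
    (ψ : Ω → ℝ)
    (hψ : ∀ ω, ψ ω = (D ω / p (X ω)) * η1 (Y1 ω)
      - ((1 - D ω) / (1 - p (X ω))) * η0 (Y0 ω))
    -- m_j(X) is a version of E[η_j(Y(j)) | σ(X)]
    (m0 m1 : (Fin k → ℝ) → ℝ) (hm0meas : Measurable m0) (hm1meas : Measurable m1)
    (hm0 : (fun ω => m0 (X ω)) =ᵐ[μ]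
      μ[(fun ω => η0 (Y0 ω)) | MeasurableSpace.comap X inferInstance])
    (hm1 : (fun ω => m1 (X ω)) =ᵐ[μ]
      μ[(fun ω => η1 (Y1 ω)) | MeasurableSpace.comap X inferInstance])
    -- n_p(X) = m₁(X)/p(X) + m₀(X)/(1−p(X))
    (np : (Fin k → ℝ) → ℝ)
    (hnp : ∀ x, np x = m1 x / p x + m0 x / (1 - p x))
    -- ε = D − p(X)
    (ε : Ω → ℝ) (hε : ∀ ω, ε ω = D ω - p (X ω))
    -- φ₂ = ψ − n_p(X)·ε
    (φ₂ : Ω → ℝ) (hφ₂ : ∀ ω, φ₂ ω = ψ ω - np (X ω) * ε ω) :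
    (μ[(fun ω => (ψ ω) ^ 2) | MeasurableSpace.comap X₁ inferInstance]
        =ᵐ[μ]
      μ[(fun ω => (φ₂ ω) ^ 2) | MeasurableSpace.comap X₁ inferInstance]
        + μ[(fun ω => p (X ω) * (1 - p (X ω)) * (np (X ω)) ^ 2) |
            MeasurableSpace.comap X₁ inferInstance])
      ∧
    (∀ᵐ ω ∂μ,
      (μ[(fun ω' => (φ₂ ω') ^ 2) | MeasurableSpace.comap X₁ inferInstance]) ω
        ≤ (μ[(fun ω' => (ψ ω') ^ 2) | MeasurableSpace.comap X₁ inferInstance]) ω) :=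
  pcqte_vs_ncqte_variance_comparison_general (mΩ := mΩ) μ hlk D Y0 Y1 X hD hY0 hY1 hX hD01 X₁ hX₁ p
    hp hpX c hc hoverlap hunconf τ q0 q1 f0 f1 η0 η1 hη0 hη1 ψ hψ m0 m1 hm0meas hm1meas hm0 hm1 np
    hnp ε hε φ₂ hφ₂
end
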